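/- arXiv:0704.1955 — 4 statements merged into one kernel-verified Lean document; each statement's English description precedes it below -/
import Mathlib

section
/- Let X be a Banach space, 0 < θ < 1, and suppose x_1,…,x_N ∈ X with ‖x_j‖ ≤ 1 and functionals x*_1,…,x*_N ∈ X* with ‖x*_k‖ ≤ 1 satisfy x*_k(x_j) = θ for k < j and x*_k(x_j) = 0 for k ≥ j. Let Φ : T_n → {1,…,N} be the lexicographic enumeration of the binary tree T_n of depth n (where N = 2^{n+1}-1). Then the map f(ε) = Σ_{s ≤ ε} x_{Φ(s)} satisfies (θ/3)·ρ(ε,ε') ≤ ‖f(ε) - f(ε')‖ ≤ ρ(ε,ε') for all ε, ε' ∈ T_n. -/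
/-!
Write `δ` for the longest common prefix of `ε` and `ε'`. Then `f ε - f ε'` is the sum of the
`x (Φ s)` over the nodes `s ≠ δ` of the path from `δ` to `ε`, minus the same sum for the path from
`δ` to `ε'`; these paths have `ρ(ε, ε')` nodes in total, which gives the upper bound.

For the lower bound let `ε` precede `ε'` lexicographically, with `a` and `b` nodes on the two
paths. In the enumeration, every node of both paths comes after `δ`, and every node of the path
to `ε'` comes after `ε`. Hence `x*_{Φ ε}` and `x*_{Φ δ}` take the values `-bθ` and `(a - b)θ` on
`w = f ε - f ε'`, so `bθ ≤ ‖w‖` and `aθ ≤ 2‖w‖`; adding gives `(a + b)θ ≤ 3‖w‖`.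
-/

/-- Longest common prefix of two `{-1,1}`-valued sequences (modeled as `List Bool`). -/
def lcp : List Bool → List Bool → List Bool
  | a :: as, b :: bs => if a = b then a :: lcp as bs else []
  | _, _ => []

/-- The hyperbolic distance on the infinite binary tree `T`. -/
def rho (x y : List Bool) : ℕ :=
  (x.length - (lcp x y).length) + (y.length - (lcp x y).length)

open Finset

theorem List.nodup_inits {α : Type*} (l : List α) : l.inits.Nodup := by
  induction l with
  | nil => simp
  | cons a l ih =>
    rw [List.inits_cons, List.nodup_cons]
    exact ⟨by simp, ih.map fun _ _ h => List.cons_injective h⟩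

theorem List.IsPrefix.inits_toFinset_subset {α : Type*} [DecidableEq α] {l l' : List α}
    (h : l <+: l') : l.inits.toFinset ⊆ l'.inits.toFinset := fun s hs => by
  simp only [List.mem_toFinset, List.mem_inits] at hs ⊢
  exact hs.trans h

theorem card_inits_sdiff {α : Type*} [DecidableEq α] {l l' : List α} (h : l <+: l') :
    #(l'.inits.toFinset \ l.inits.toFinset) = l'.length - l.length := by
  rw [card_sdiff_of_subset h.inits_toFinset_subset, List.toFinset_card_of_nodup l.nodup_inits,
    List.toFinset_card_of_nodup l'.nodup_inits, List.length_inits, List.length_inits]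
  omega

theorem List.lex_of_prefix_of_ne {α : Type*} {r : α → α → Prop} {l l' : List α} (h : l <+: l')
    (hne : l ≠ l') : List.Lex r l l' := by
  obtain ⟨_ | ⟨c, u⟩, rfl⟩ := h
  · simp at hne
  · simpa using List.Lex.append_left r (List.Lex.nil (a := c) (l := u)) l

theorem List.lex_of_prefix_of_not_prefix {α : Type*} {r : α → α → Prop} :
    ∀ {a b s : List α}, List.Lex r a b → s <+: b → ¬ s <+: a → List.Lex r a s
  | _, _, [], _, _, hs => absurd List.nil_prefix hs
  | [], _, _ :: _, _, _, _ => List.Lex.nil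
  | a :: as, _, c :: s, .cons hab, hsb, hsa => by
    rw [List.cons_prefix_cons] at hsb hsa
    obtain ⟨rfl, hsb⟩ := hsb
    exact .cons (List.lex_of_prefix_of_not_prefix hab hsb (fun h => hsa ⟨rfl, h⟩))
  | a :: as, _, c :: s, .rel hab, hsb, _ => by
    rw [List.cons_prefix_cons] at hsb
    exact hsb.1 ▸ .rel hab

theorem prefix_lcp_iff : ∀ {s a b : List Bool}, s <+: lcp a b ↔ s <+: a ∧ s <+: b
  | [], _, _ => by simp
  | _ :: _, [], _ => by simp [lcp]
  | _ :: _, _ :: _, [] => by simp [lcp]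
  | c :: s, a :: as, b :: bs => by
    by_cases hab : a = b
    · subst hab
      simp only [lcp, if_true, List.cons_prefix_cons, prefix_lcp_iff]
      tauto
    · simp only [lcp, hab, if_false, List.prefix_nil, reduceCtorEq, false_iff,
        List.cons_prefix_cons, not_and]
      rintro ⟨rfl, -⟩ rfl
      exact absurd rfl hab

theorem lcp_prefix_left (a b : List Bool) : lcp a b <+: a := (prefix_lcp_iff.1 List.prefix_rfl).1

theorem lcp_prefix_right (a b : List Bool) : lcp a b <+: b := (prefix_lcp_iff.1 List.prefix_rfl).2

theorem lcp_comm (a b : List Bool) : lcp a b = lcp b a :=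
  antisymm (r := (· <+: ·)) (prefix_lcp_iff.2 ⟨lcp_prefix_right a b, lcp_prefix_left a b⟩)
    (prefix_lcp_iff.2 ⟨lcp_prefix_right b a, lcp_prefix_left b a⟩)

theorem lcp_self (a : List Bool) : lcp a a = a :=
  antisymm (r := (· <+: ·)) (lcp_prefix_left a a)
    (prefix_lcp_iff.2 ⟨List.prefix_rfl, List.prefix_rfl⟩)

theorem rho_comm (a b : List Bool) : rho a b = rho b a := by
  rw [rho, rho, lcp_comm, add_comm]

theorem rho_self (a : List Bool) : rho a a = 0 := by
  simp [rho, lcp_self]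

theorem lex_lcp_of_prefix_of_not_prefix {r : Bool → Bool → Prop} {a b s : List Bool}
    (hsa : s <+: a) (hsb : ¬ s <+: b) : List.Lex r (lcp a b) s := by
  refine List.lex_of_prefix_of_ne ?_ fun h => hsb (h ▸ lcp_prefix_right a b)
  refine (List.prefix_or_prefix_of_prefix hsa (lcp_prefix_left a b)).resolve_left fun h => ?_
  exact hsb (h.trans (lcp_prefix_right a b))

theorem mem_inits_sdiff_lcp_left {s a b : List Bool} :
    s ∈ a.inits.toFinset \ (lcp a b).inits.toFinset ↔ s <+: a ∧ ¬ s <+: b := by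
  simp only [mem_sdiff, List.mem_toFinset, List.mem_inits, prefix_lcp_iff]
  tauto

theorem mem_inits_sdiff_lcp_right {s a b : List Bool} :
    s ∈ b.inits.toFinset \ (lcp a b).inits.toFinset ↔ s <+: b ∧ ¬ s <+: a := by
  rw [lcp_comm, mem_inits_sdiff_lcp_left]

theorem rho_eq_card_add_card (a b : List Bool) :
    rho a b = #(a.inits.toFinset \ (lcp a b).inits.toFinset)
      + #(b.inits.toFinset \ (lcp a b).inits.toFinset) := by
  rw [card_inits_sdiff (lcp_prefix_left a b), card_inits_sdiff (lcp_prefix_right a b), rho]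

def pathSum {X : Type*} [AddCommMonoid X] (v : List Bool → X) (ε : List Bool) : X :=
  ∑ s ∈ ε.inits.toFinset, v s

theorem pathSum_sub_pathSum {X : Type*} [AddCommGroup X] (v : List Bool → X) (a b : List Bool) :
    pathSum v a - pathSum v b =
      ∑ s ∈ a.inits.toFinset \ (lcp a b).inits.toFinset, v s
        - ∑ s ∈ b.inits.toFinset \ (lcp a b).inits.toFinset, v s := by
  rw [pathSum, pathSum, ← sum_sdiff (lcp_prefix_left a b).inits_toFinset_subset,
    ← sum_sdiff (lcp_prefix_right a b).inits_toFinset_subset]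
  abel

theorem norm_pathSum_sub_le {X : Type*} [SeminormedAddCommGroup X] {v : List Bool → X}
    {a b : List Bool} (hv : ∀ s, s <+: a ∨ s <+: b → ‖v s‖ ≤ 1) :
    ‖pathSum v a - pathSum v b‖ ≤ rho a b := by
  have hA : ∀ s ∈ a.inits.toFinset \ (lcp a b).inits.toFinset, ‖v s‖ ≤ 1 :=
    fun s hs => hv s (.inl (mem_inits_sdiff_lcp_left.1 hs).1)
  have hB : ∀ s ∈ b.inits.toFinset \ (lcp a b).inits.toFinset, ‖v s‖ ≤ 1 :=
    fun s hs => hv s (.inr (mem_inits_sdiff_lcp_right.1 hs).1)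
  rw [pathSum_sub_pathSum, rho_eq_card_add_card, Nat.cast_add]
  refine (norm_sub_le _ _).trans (add_le_add ?_ ?_)
  · simpa using norm_sum_le_of_le _ hA
  · simpa using norm_sum_le_of_le _ hB

section James

variable {X : Type*} [NormedAddCommGroup X] [NormedSpace ℝ X] {θ : ℝ} {N : ℕ} {x : ℕ → X}
  {xs : ℕ → X →L[ℝ] ℝ}

theorem le_norm_sum_sub_sum (hxs : ∀ k, 1 ≤ k → k ≤ N → ‖xs k‖ ≤ 1)
    (hθeq : ∀ k j, 1 ≤ k → j ≤ N → k < j → xs k (x j) = θ)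
    (h0 : ∀ k j, 1 ≤ j → k ≤ N → j ≤ k → xs k (x j) = 0)
    {α : Type*} {A B : Finset α} {idx : α → ℕ} {k₀ k₁ : ℕ} (hk₀ : 1 ≤ k₀) (hk₀₁ : k₀ ≤ k₁)
    (hk₁ : k₁ ≤ N) (hA : ∀ s ∈ A, idx s ∈ Set.Ioc k₀ k₁) (hB : ∀ s ∈ B, idx s ∈ Set.Ioc k₁ N) :
    θ / 3 * (#A + #B) ≤ ‖∑ s ∈ A, x (idx s) - ∑ s ∈ B, x (idx s)‖ := by
  set w := ∑ s ∈ A, x (idx s) - ∑ s ∈ B, x (idx s)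
  have eval (k : ℕ) {c d : ℝ} (hcA : ∀ s ∈ A, xs k (x (idx s)) = c)
      (hdB : ∀ s ∈ B, xs k (x (idx s)) = d) : xs k w = #A * c - #B * d := by
    simp [w, map_sum, sum_congr rfl hcA, sum_congr rfl hdB]
  have e₁ : xs k₁ w = #A * 0 - #B * θ := by
    refine eval k₁ (fun s hs => h0 _ _ ?_ hk₁ (hA s hs).2)
      (fun s hs => hθeq _ _ ?_ (hB s hs).2 (hB s hs).1)
    · exact hk₀.trans (hA s hs).1.le
    · exact hk₀.trans hk₀₁
  have e₀ : xs k₀ w = #A * θ - #B * θ := by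
    refine eval k₀ (fun s hs => hθeq _ _ hk₀ ?_ (hA s hs).1)
      (fun s hs => hθeq _ _ hk₀ (hB s hs).2 (hk₀₁.trans_lt (hB s hs).1))
    exact (hA s hs).2.trans hk₁
  have bound {k : ℕ} (hk : 1 ≤ k) (hkN : k ≤ N) : |xs k w| ≤ ‖w‖ := by
    simpa using (xs k).le_of_opNorm_le (hxs k hk hkN) w
  have b₁ := abs_le.1 (bound (hk₀.trans hk₀₁) hk₁)
  have b₀ := abs_le.1 (bound hk₀ (hk₀₁.trans hk₁))
  linarith

theorem le_norm_pathSum_sub_of_lex (hxs : ∀ k, 1 ≤ k → k ≤ N → ‖xs k‖ ≤ 1)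
    (hθeq : ∀ k j, 1 ≤ k → j ≤ N → k < j → xs k (x j) = θ)
    (h0 : ∀ k j, 1 ≤ j → k ≤ N → j ≤ k → xs k (x j) = 0)
    {n : ℕ} {Φ : List Bool → ℕ} (hΦ : Set.MapsTo Φ {l : List Bool | l.length ≤ n} (Set.Icc 1 N))
    (hΦmono : ∀ s t : List Bool, s.length ≤ n → t.length ≤ n →
      List.Lex (· < ·) s t → Φ s < Φ t)
    {a b : List Bool} (ha : a.length ≤ n) (hb : b.length ≤ n) (hab : List.Lex (· < ·) a b) :
    θ / 3 * rho a b ≤ ‖pathSum (fun s => x (Φ s)) a - pathSum (fun s => x (Φ s)) b‖ := by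
  have le_of_prefix {s t : List Bool} (hst : s <+: t) (ht : t.length ≤ n) : Φ s ≤ Φ t := by
    rcases eq_or_ne s t with rfl | hne
    · rfl
    · exact (hΦmono s t (hst.length_le.trans ht) ht (List.lex_of_prefix_of_ne hst hne)).le
  rw [pathSum_sub_pathSum, rho_eq_card_add_card, Nat.cast_add]
  have hδ : (lcp a b).length ≤ n := (lcp_prefix_left a b).length_le.trans ha
  refine le_norm_sum_sub_sum hxs hθeq h0 (hΦ hδ).1 (le_of_prefix (lcp_prefix_left a b) ha)
    (hΦ ha).2 (fun s hs => ?_) (fun s hs => ?_)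
  · obtain ⟨hsa, hsb⟩ := mem_inits_sdiff_lcp_left.1 hs
    have hs : s.length ≤ n := hsa.length_le.trans ha
    exact ⟨hΦmono _ _ hδ hs (lex_lcp_of_prefix_of_not_prefix hsa hsb), le_of_prefix hsa ha⟩
  · obtain ⟨hsb, hsa⟩ := mem_inits_sdiff_lcp_right.1 hs
    have hs : s.length ≤ n := hsb.length_le.trans hb
    exact ⟨hΦmono _ _ ha hs (List.lex_of_prefix_of_not_prefix hab hsb hsa), (hΦ hs).2⟩

end James

theorem bourgain_tree_embedding_general
    {X : Type*} [NormedAddCommGroup X] [NormedSpace ℝ X]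
    (θ : ℝ) (n N : ℕ)
    (x : ℕ → X) (hx : ∀ j, 1 ≤ j → j ≤ N → ‖x j‖ ≤ 1)
    (xs : ℕ → X →L[ℝ] ℝ) (hxs : ∀ k, 1 ≤ k → k ≤ N → ‖xs k‖ ≤ 1)
    (hθeq : ∀ k j, 1 ≤ k → j ≤ N → k < j → xs k (x j) = θ)
    (h0 : ∀ k j, 1 ≤ j → k ≤ N → j ≤ k → xs k (x j) = 0)
    (Φ : List Bool → ℕ)
    (hΦbij : Set.BijOn Φ {l : List Bool | l.length ≤ n} (Set.Icc 1 N))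
    (hΦmono : ∀ s t : List Bool, s.length ≤ n → t.length ≤ n →
      List.Lex (· < ·) s t → Φ s < Φ t) :
    ∀ ε ε' : List Bool, ε.length ≤ n → ε'.length ≤ n →
      (θ / 3) * (rho ε ε' : ℝ) ≤
        ‖(∑ s ∈ ε.inits.toFinset, x (Φ s)) - ∑ s ∈ ε'.inits.toFinset, x (Φ s)‖ ∧
      ‖(∑ s ∈ ε.inits.toFinset, x (Φ s)) - ∑ s ∈ ε'.inits.toFinset, x (Φ s)‖ ≤
        (rho ε ε' : ℝ) := by
  intro ε ε' hε hε'
  have hΦ := hΦbij.mapsTo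
  refine ⟨?_, norm_pathSum_sub_le fun s hs => ?_⟩
  · rcases trichotomous_of (List.Lex (· < ·)) ε ε' with h | rfl | h
    · exact le_norm_pathSum_sub_of_lex hxs hθeq h0 hΦ hΦmono hε hε' h
    · simp [rho_self]
    · rw [norm_sub_rev, rho_comm]
      exact le_norm_pathSum_sub_of_lex hxs hθeq h0 hΦ hΦmono hε' hε h
  · have hs : s.length ≤ n := hs.elim (·.length_le.trans hε) (·.length_le.trans hε')
    exact hx _ (hΦ hs).1 (hΦ hs).2

/-- Bourgain's embedding of the binary tree `T_n` of depth `n` into a Banach space: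
given James-type vectors and functionals and the lexicographic enumeration `Φ` of `T_n`
(characterized as the strictly monotone bijection onto `{1,…,2^{n+1}-1}` for the
lexicographic order), the map `f(ε) = ∑_{s ≤ ε} x_{Φ(s)}` has distortion at most `3/θ`. -/
theorem bourgain_tree_embedding
    {X : Type*} [NormedAddCommGroup X] [NormedSpace ℝ X] [CompleteSpace X]
    (θ : ℝ) (hθ0 : 0 < θ) (hθ1 : θ < 1) (n N : ℕ) (hN : N = 2 ^ (n + 1) - 1)
    (x : ℕ → X) (hx : ∀ j, 1 ≤ j → j ≤ N → ‖x j‖ ≤ 1)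
    (xs : ℕ → X →L[ℝ] ℝ) (hxs : ∀ k, 1 ≤ k → k ≤ N → ‖xs k‖ ≤ 1)
    (hθeq : ∀ k j, 1 ≤ k → j ≤ N → k < j → xs k (x j) = θ)
    (h0 : ∀ k j, 1 ≤ j → k ≤ N → j ≤ k → xs k (x j) = 0)
    (Φ : List Bool → ℕ)
    (hΦbij : Set.BijOn Φ {l : List Bool | l.length ≤ n} (Set.Icc 1 N))
    (hΦmono : ∀ s t : List Bool, s.length ≤ n → t.length ≤ n →
      List.Lex (· < ·) s t → Φ s < Φ t) :
    ∀ ε ε' : List Bool, ε.length ≤ n → ε'.length ≤ n →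
      (θ / 3) * (rho ε ε' : ℝ) ≤
        ‖(∑ s ∈ ε.inits.toFinset, x (Φ s)) - ∑ s ∈ ε'.inits.toFinset, x (Φ s)‖ ∧
      ‖(∑ s ∈ ε.inits.toFinset, x (Φ s)) - ∑ s ∈ ε'.inits.toFinset, x (Φ s)‖ ≤
        (rho ε ε' : ℝ) :=
  bourgain_tree_embedding_general θ n N x hx xs hxs hθeq h0 Φ hΦbij hΦmono
end

section
/- Let Z be a Banach space with closed subspaces (F_i)_{i≥0} forming a Schauder finite dimensional decomposition, and suppose the projection from F_0 ⊕ … ⊕ F_q onto F_0 ⊕ … ⊕ F_p along F_{p+1} ⊕ … ⊕ F_q has norm at most ∏_{i=p}^{q-1}(1+ε_i) for all p < q, where ε_i > 0 and ∏_{i≥0}(1+ε_i) ≤ 2. Then the projection P_n from the closed span of ⋃_i F_i onto F_0 ⊕ … ⊕ F_n with kernel the closed span of ⋃_{i>n} F_i satisfies ‖P_n‖ ≤ ∏_{i≥n}(1+ε_i) ≤ 2, and the coordinate projections Π_0 = P_0 and Π_n = P_n - P_{n-1} (n ≥ 1) satisfy ‖Π_n‖ ≤ 4. -/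
/-!
Fix `z = ∑ xᵢ` and write `Sₘ = x₀ + ⋯ + x_{m-1}`. The hypothesis bounds `‖S_{n+1}‖` by
`∏_{i=n}^{q-1}(1+εᵢ) ‖S_{q+1}‖` for every `q > n`; since the factors are at least `1`, these
finite products are dominated both by the tail product `∏_{i≥n}(1+εᵢ)` and by `2`, and letting
`q → ∞` gives the bounds on `Pₙ z = S_{n+1}`. Then `xₙ = S_{n+1} - Sₙ` has norm at most `2 + 2`.
-/

open Filter Finset

namespace Real

variable {ι : Type*} {f : ι → ℝ}

theorem prod_le_tprod_of_one_le (hf : ∀ i, 1 ≤ f i)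
    (hbdd : BddAbove (Set.range fun s : Finset ι => ∏ i ∈ s, f i)) (s : Finset ι) :
    ∏ i ∈ s, f i ≤ ∏' i, f i := by
  have hprod : HasProd f (⨆ t : Finset ι, ∏ i ∈ t, f i) :=
    tendsto_atTop_ciSup (prod_mono_set_of_one_le hf) hbdd
  rw [hprod.tprod_eq]
  exact le_ciSup hbdd s

theorem bddAbove_range_prod_of_prod_range_le {f : ℕ → ℝ} (hf : ∀ i, 1 ≤ f i) {C : ℝ}
    (h : ∀ n, ∏ i ∈ range n, f i ≤ C) :
    BddAbove (Set.range fun s : Finset ℕ => ∏ i ∈ s, f i) := by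
  refine ⟨C, ?_⟩
  rintro _ ⟨s, rfl⟩
  exact (prod_mono_set_of_one_le hf s.subset_range_sup_succ).trans (h _)

end Real

theorem prod_range_add_le_prod_range {f : ℕ → ℝ} (hf : ∀ i, 1 ≤ f i) (n m : ℕ) :
    ∏ i ∈ range m, f (n + i) ≤ ∏ i ∈ range (n + m), f i := by
  rw [prod_range_add]
  exact le_mul_of_one_le_left (prod_nonneg fun i _ => zero_le_one.trans (hf _))
    (one_le_prod fun i _ => hf i)

theorem prod_Icc_sub_one_eq_prod_range {M : Type*} [CommMonoid M] (f : ℕ → M) {n q : ℕ}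
    (h : n < q) : ∏ i ∈ Icc n (q - 1), f i = ∏ i ∈ range (q - n), f (n + i) := by
  rw [Icc_sub_one_right_eq_Ico_of_not_isMin (by simpa using h.ne_bot), prod_Ico_eq_prod_range]

theorem norm_le_two_mul_of_norm_partialSum_le {E : Type*} [SeminormedAddCommGroup E]
    {x : ℕ → E} {C : ℝ} (h : ∀ n, ‖∑ i ∈ range (n + 1), x i‖ ≤ C) (n : ℕ) :
    ‖x n‖ ≤ 2 * C := by
  have hC : 0 ≤ C := (norm_nonneg _).trans (h 0)
  cases n with
  | zero => simpa using (h 0).trans (by linarith)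
  | succ m =>
    rw [← sum_range_succ_sub_sum x]
    calc ‖∑ i ∈ range (m + 1 + 1), x i - ∑ i ∈ range (m + 1), x i‖
        ≤ ‖∑ i ∈ range (m + 1 + 1), x i‖ + ‖∑ i ∈ range (m + 1), x i‖ := norm_sub_le _ _
      _ ≤ 2 * C := by linarith [h (m + 1), h m]

theorem fdd_projection_bounds_general
    {Z : Type*} [NormedAddCommGroup Z] [NormedSpace ℝ Z]
    (F : ℕ → Submodule ℝ Z)
    (e : ℕ → ℝ) (he : ∀ i, 0 < e i)
    (hprod : ∀ n, ∏ i ∈ Finset.range n, (1 + e i) ≤ 2)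
    (hproj : ∀ p q : ℕ, p < q → ∀ x : (i : ℕ) → F i,
      ‖∑ i ∈ Finset.range (p + 1), (x i : Z)‖ ≤
        (∏ i ∈ Finset.Icc p (q - 1), (1 + e i)) * ‖∑ i ∈ Finset.range (q + 1), (x i : Z)‖) :
    ∀ (z : Z) (x : (i : ℕ) → F i),
      Filter.Tendsto (fun n => ∑ i ∈ Finset.range n, (x i : Z)) Filter.atTop (nhds z) →
      (∀ n, ‖∑ i ∈ Finset.range (n + 1), (x i : Z)‖ ≤ (∏' i : ℕ, (1 + e (n + i))) * ‖z‖) ∧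
      (∀ n, ‖∑ i ∈ Finset.range (n + 1), (x i : Z)‖ ≤ 2 * ‖z‖) ∧
      (∀ n, ‖(x n : Z)‖ ≤ 4 * ‖z‖) := by
  intro z x hx
  have hone : ∀ i, 1 ≤ 1 + e i := fun i => le_add_of_nonneg_right (he i).le
  have hlimit : ∀ n C, (∀ q, n < q → ∏ i ∈ Icc n (q - 1), (1 + e i) ≤ C) →
      ‖∑ i ∈ range (n + 1), (x i : Z)‖ ≤ C * ‖z‖ := fun n C hC =>
    ge_of_tendsto (((hx.comp (tendsto_add_atTop_nat 1)).norm).const_mul C) <|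
      (eventually_gt_atTop n).mono fun q hq =>
        (hproj n q hq x).trans (mul_le_mul_of_nonneg_right (hC q hq) (norm_nonneg _))
  have htail : ∀ n m, ∏ i ∈ range m, (1 + e (n + i)) ≤ 2 := fun n m =>
    (prod_range_add_le_prod_range hone n m).trans (hprod _)
  have hP : ∀ n, ‖∑ i ∈ range (n + 1), (x i : Z)‖ ≤ 2 * ‖z‖ := fun n =>
    hlimit n 2 fun q hq => (prod_Icc_sub_one_eq_prod_range _ hq).le.trans (htail n _)
  refine ⟨fun n => hlimit n _ fun q hq => ?_, hP, fun n => ?_⟩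
  · rw [prod_Icc_sub_one_eq_prod_range _ hq]
    exact Real.prod_le_tprod_of_one_le (fun i => hone _)
      (Real.bddAbove_range_prod_of_prod_range_le (fun i => hone _) (htail n)) _
  · linarith [norm_le_two_mul_of_norm_partialSum_le hP n]

/-- Bounds on the projections associated with a Schauder finite dimensional decomposition:
if the finite-rank projections onto `F_0 ⊕ … ⊕ F_p` inside `F_0 ⊕ … ⊕ F_q` have norm at most
`∏_{i=p}^{q-1}(1+ε_i)` with `∏(1+ε_i) ≤ 2`, then the decomposition projections `P_n` satisfy
`‖P_n z‖ ≤ (∏_{i≥n}(1+ε_i))‖z‖ ≤ 2‖z‖` and the coordinate projections satisfy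
`‖Π_n z‖ ≤ 4‖z‖`. -/
theorem fdd_projection_bounds
    {Z : Type*} [NormedAddCommGroup Z] [NormedSpace ℝ Z] [CompleteSpace Z]
    (F : ℕ → Submodule ℝ Z) (hfin : ∀ i, FiniteDimensional ℝ (F i))
    (hFDD : ∀ z : Z, ∃! x : (i : ℕ) → F i,
      Filter.Tendsto (fun n => ∑ i ∈ Finset.range n, (x i : Z)) Filter.atTop (nhds z))
    (e : ℕ → ℝ) (he : ∀ i, 0 < e i)
    (hprod : ∀ n, ∏ i ∈ Finset.range n, (1 + e i) ≤ 2)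
    (hproj : ∀ p q : ℕ, p < q → ∀ x : (i : ℕ) → F i,
      ‖∑ i ∈ Finset.range (p + 1), (x i : Z)‖ ≤
        (∏ i ∈ Finset.Icc p (q - 1), (1 + e i)) * ‖∑ i ∈ Finset.range (q + 1), (x i : Z)‖) :
    ∀ (z : Z) (x : (i : ℕ) → F i),
      Filter.Tendsto (fun n => ∑ i ∈ Finset.range n, (x i : Z)) Filter.atTop (nhds z) →
      (∀ n, ‖∑ i ∈ Finset.range (n + 1), (x i : Z)‖ ≤ (∏' i : ℕ, (1 + e (n + i))) * ‖z‖) ∧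
      (∀ n, ‖∑ i ∈ Finset.range (n + 1), (x i : Z)‖ ≤ 2 * ‖z‖) ∧
      (∀ n, ‖(x n : Z)‖ ≤ 4 * ‖z‖) :=
  fdd_projection_bounds_general F e he hprod hproj
end

section
/- For all ε, ε' in the infinite binary tree T and all p ∈ [1,∞), d_p(ε,ε')^p ≤ 2^p · ρ(ε,ε'), and d_p(ε,ε')^p ≥ | |ε| - |ε'| |. -/
/-- The `i`-th coordinate of `ε ∈ T ⊆ ℓ_p`: `±1` for `i < |ε|` (with `true ↦ 1`,
`false ↦ -1`), and `0` beyond the length of `ε`. -/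
def coord (ε : List Bool) (i : ℕ) : ℝ :=
  if h : i < ε.length then (if ε.get ⟨i, h⟩ then 1 else -1) else 0

/-- The metric `d_p` on the infinite binary tree `T`, induced by the `ℓ_p` norm:
`d_p(ε,ε') = (∑_i |ε_i - ε'_i|^p)^{1/p}`. -/
noncomputable def dp (p : ℝ) (ε ε' : List Bool) : ℝ :=
  (∑ i ∈ Finset.range (max ε.length ε'.length), |coord ε i - coord ε' i| ^ p) ^ (1 / p)

/-! Coordinates of `ε` and `ε'` agree below `|lcp ε ε'|`, where the summand of `d_p^p` vanishes;
every other summand is at most `2^p`, and there are at most `ρ(ε,ε')` of them. Between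
`min(|ε|,|ε'|)` and `max(|ε|,|ε'|)` exactly one of the two coordinates is `±1` and the other `0`,
so each of these `||ε| - |ε'||` summands equals `1`. -/

lemma length_lcp_le_left : ∀ x y : List Bool, (lcp x y).length ≤ x.length
  | [], _ | _ :: _, [] => by simp [lcp]
  | a :: as, b :: bs => by
    by_cases h : a = b <;> simp [lcp, h, length_lcp_le_left as bs]

lemma length_lcp_le_right : ∀ x y : List Bool, (lcp x y).length ≤ y.length
  | [], _ | _ :: _, [] => by simp [lcp]
  | a :: as, b :: bs => by
    by_cases h : a = b <;> simp [lcp, h, length_lcp_le_right as bs]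

lemma max_length_sub_length_lcp_le_rho (x y : List Bool) :
    max x.length y.length - (lcp x y).length ≤ rho x y := by
  unfold rho
  omega

lemma coord_cons_succ (a : Bool) (as : List Bool) (i : ℕ) :
    coord (a :: as) (i + 1) = coord as i := by
  simp [coord]

lemma coord_eq_of_lt_length_lcp :
    ∀ (x y : List Bool) (i : ℕ), i < (lcp x y).length → coord x i = coord y i
  | [], _, _, h | _ :: _, [], _, h => by simp [lcp] at h
  | a :: as, b :: bs, i, h => by
    by_cases hab : a = b
    · subst hab
      cases i with
      | zero => rfl
      | succ j =>
        simp only [lcp, if_pos, List.length_cons, Nat.add_lt_add_iff_right] at h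
        rw [coord_cons_succ, coord_cons_succ]
        exact coord_eq_of_lt_length_lcp as bs j h
    · simp [lcp, hab] at h

lemma coord_of_length_le {x : List Bool} {i : ℕ} (h : x.length ≤ i) : coord x i = 0 := by
  simp [coord, h]

lemma abs_coord_of_lt_length {x : List Bool} {i : ℕ} (h : i < x.length) : |coord x i| = 1 := by
  unfold coord
  split_ifs <;> norm_num

lemma abs_coord_le_one (x : List Bool) (i : ℕ) : |coord x i| ≤ 1 := by
  rcases lt_or_ge i x.length with h | h
  · exact (abs_coord_of_lt_length h).le
  · simp [coord_of_length_le h]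

lemma abs_coord_sub_coord_le_two (x y : List Bool) (i : ℕ) : |coord x i - coord y i| ≤ 2 :=
  calc |coord x i - coord y i| ≤ |coord x i| + |coord y i| := abs_sub _ _
    _ ≤ 1 + 1 := add_le_add (abs_coord_le_one x i) (abs_coord_le_one y i)
    _ = 2 := by norm_num

lemma abs_coord_sub_coord_of_mem_Ico {x y : List Bool} {i : ℕ}
    (hi : i ∈ Finset.Ico (min x.length y.length) (max x.length y.length)) :
    |coord x i - coord y i| = 1 := by
  rw [Finset.mem_Ico] at hi
  rcases le_total x.length y.length with h | h
  · rw [coord_of_length_le (by omega), zero_sub, abs_neg, abs_coord_of_lt_length (by omega)]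
  · rw [coord_of_length_le (x := y) (by omega), sub_zero, abs_coord_of_lt_length (by omega)]

lemma dp_rpow {p : ℝ} (hp : p ≠ 0) (x y : List Bool) :
    dp p x y ^ p = ∑ i ∈ Finset.range (max x.length y.length), |coord x i - coord y i| ^ p := by
  rw [dp, ← Real.rpow_mul (Finset.sum_nonneg fun i _ => by positivity), one_div_mul_cancel hp,
    Real.rpow_one]

lemma dp_rpow_le {p : ℝ} (hp : 0 < p) (x y : List Bool) :
    dp p x y ^ p ≤ (max x.length y.length - (lcp x y).length : ℕ) * 2 ^ p := by
  have hl : (lcp x y).length ≤ max x.length y.length :=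
    (length_lcp_le_left x y).trans (le_max_left _ _)
  have hprefix : ∑ i ∈ Finset.range (lcp x y).length, |coord x i - coord y i| ^ p = 0 :=
    Finset.sum_eq_zero fun i hi => by
      rw [coord_eq_of_lt_length_lcp x y i (Finset.mem_range.mp hi), sub_self, abs_zero,
        Real.zero_rpow hp.ne']
  rw [dp_rpow hp.ne', ← Finset.sum_range_add_sum_Ico _ hl, hprefix, zero_add, ← Nat.card_Ico,
    ← nsmul_eq_mul, ← Finset.sum_const]
  exact Finset.sum_le_sum fun i _ =>
    Real.rpow_le_rpow (abs_nonneg _) (abs_coord_sub_coord_le_two x y i) hp.le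

lemma abs_length_sub_length_le_dp_rpow {p : ℝ} (hp : p ≠ 0) (x y : List Bool) :
    |(x.length : ℝ) - y.length| ≤ dp p x y ^ p := by
  have hcard : |(x.length : ℝ) - y.length|
      = ∑ i ∈ Finset.Ico (min x.length y.length) (max x.length y.length),
          |coord x i - coord y i| ^ p := by
    rw [Finset.sum_congr rfl fun i hi => by rw [abs_coord_sub_coord_of_mem_Ico hi, Real.one_rpow],
      Finset.sum_const, Nat.card_Ico, nsmul_one, Nat.cast_sub min_le_max, ← max_sub_min_eq_abs',
      Nat.cast_max, Nat.cast_min]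
  rw [hcard, dp_rpow hp]
  exact Finset.sum_le_sum_of_subset_of_nonneg
    (fun i hi => Finset.mem_range.mpr (Finset.mem_Ico.mp hi).2)
    fun i _ _ => by positivity

/-- Comparison between `d_p` and the hyperbolic metric `ρ`:
`d_p(ε,ε')^p ≤ 2^p ρ(ε,ε')` and `d_p(ε,ε')^p ≥ ||ε| - |ε'||`. -/
theorem dp_pow_compare_rho (p : ℝ) (hp : 1 ≤ p) (ε ε' : List Bool) :
    (dp p ε ε') ^ p ≤ (2 : ℝ) ^ p * (rho ε ε' : ℝ) ∧
    |(ε.length : ℝ) - (ε'.length : ℝ)| ≤ (dp p ε ε') ^ p := by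
  have hp0 : 0 < p := zero_lt_one.trans_le hp
  refine ⟨?_, abs_length_sub_length_le_dp_rpow hp0.ne' ε ε'⟩
  calc dp p ε ε' ^ p ≤ (max ε.length ε'.length - (lcp ε ε').length : ℕ) * 2 ^ p :=
        dp_rpow_le hp0 ε ε'
    _ ≤ rho ε ε' * 2 ^ p := by gcongr; exact max_length_sub_length_lcp_le_rho ε ε'
    _ = 2 ^ p * rho ε ε' := mul_comm _ _
end

section
/- Let Z be a Banach space with coordinate projections Π_m (onto the m-th factor F_m of a Schauder finite dimensional decomposition) of norm at most 4, and for each m let R_m : ℓ_p^m → F_m be a linear isomorphism with (1/2)‖u‖ ≤ ‖R_m u‖ ≤ ‖u‖ for all u ∈ ℓ_p^m. Set f_m(ε) = R_m(φ_m(ε)) for ε ∈ T_m, where φ_m is the canonical isometric embedding of (T_m, d_p) into ℓ_p^m, and define f : T → Z by f(ε) = λ f_m(ε) + (1-λ) f_{m+1}(ε) for 2^m ≤ |ε| < 2^{m+1}, λ = (2^{m+1}-|ε|)/2^m. Then for ε, ε' ∈ T with 2^m ≤ |ε|, |ε'| < 2^{m+1}, one has d_p(ε,ε') ≤ 16 ‖f(ε)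 - f(ε')‖. -/
/-!
Write `λ, λ'` for the weights of `ε, ε'`. Since `Π_m` kills `F_{m+1}` and fixes `F_m`,
`Π_m (f ε - f ε') = R_m (λ φ(ε) - λ' φ(ε'))` and
`Π_{m+1} (f ε - f ε') = R_{m+1} ((1-λ) φ(ε) - (1-λ') φ(ε'))`. As `‖Π_k‖ ≤ 4` and
`‖R_k u‖ ≥ ‖u‖_p / 2`, both vectors have `ℓ_p` norm at most `8 ‖f ε - f ε'‖`; they add
up to `φ(ε) - φ(ε')`, so Minkowski's inequality gives `d_p(ε, ε') ≤ 16 ‖f ε - f ε'‖`.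
-/

open Finset

lemma coord_eq_zero_of_length_le {ε : List Bool} {i : ℕ} (h : ε.length ≤ i) :
    coord ε i = 0 := by
  simp [coord, Nat.not_lt.mpr h]

lemma mul_coord_sub_mul_coord_eq_zero {ε ε' : List Bool} {i : ℕ}
    (h : max ε.length ε'.length ≤ i) (a a' : ℝ) : a * coord ε i - a' * coord ε' i = 0 := by
  rw [coord_eq_zero_of_length_le ((le_max_left _ _).trans h),
    coord_eq_zero_of_length_le ((le_max_right _ _).trans h), mul_zero, mul_zero, sub_zero]

lemma sum_fin_rpow_eq_sum_range {p : ℝ} (hp : p ≠ 0) {u : ℕ → ℝ} {M n : ℕ}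
    (hMn : M ≤ n) (hu : ∀ i, M ≤ i → u i = 0) :
    ∑ i : Fin n, |u i| ^ p = ∑ i ∈ range M, |u i| ^ p := by
  rw [Fin.sum_univ_eq_sum_range (fun i => |u i| ^ p)]
  refine (sum_subset (range_subset_range.mpr hMn) fun i _ hi => ?_).symm
  rw [hu i (by simpa using hi), abs_zero, Real.zero_rpow hp]

lemma sum_range_rpow_one_div_le_of_proj_eq {Z : Type*} [NormedAddCommGroup Z]
    [NormedSpace ℝ Z] {p C : ℝ} (hp : p ≠ 0) {M n : ℕ} (hMn : M ≤ n) {P : Z →L[ℝ] Z}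
    (hP : ‖P‖ ≤ C) {R : (Fin n → ℝ) →ₗ[ℝ] Z}
    (hR : ∀ u, (1 / 2) * (∑ i, |u i| ^ p) ^ (1 / p) ≤ ‖R u‖)
    {u : ℕ → ℝ} (hu : ∀ i, M ≤ i → u i = 0) {z : Z} (hz : P z = R (fun i => u i)) :
    (∑ i ∈ range M, |u i| ^ p) ^ (1 / p) ≤ 2 * C * ‖z‖ := by
  have hRu := hR (fun i => u i)
  rw [sum_fin_rpow_eq_sum_range hp hMn hu, ← hz] at hRu
  have hPz : ‖P z‖ ≤ C * ‖z‖ :=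
    (P.le_opNorm z).trans (mul_le_mul_of_nonneg_right hP (norm_nonneg z))
  linarith

section Glue

variable {Z : Type*} [NormedAddCommGroup Z] [NormedSpace ℝ Z] {d : ℕ → ℕ}
  {Pi : ℕ → Z →L[ℝ] Z} {R : (m : ℕ) → (Fin (d m) → ℝ) →ₗ[ℝ] Z}

lemma proj_glue_sub_left
    (hproj : ∀ m k (u : Fin (d k) → ℝ), Pi m (R k u) = if k = m then R k u else 0)
    (m : ℕ) (a b a' b' : ℝ) (u u' : Fin (d m) → ℝ) (v v' : Fin (d (m + 1)) → ℝ) :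
    Pi m ((a • R m u + b • R (m + 1) v) - (a' • R m u' + b' • R (m + 1) v')) =
      R m (a • u - a' • u') := by
  simp [hproj]

lemma proj_glue_sub_right
    (hproj : ∀ m k (u : Fin (d k) → ℝ), Pi m (R k u) = if k = m then R k u else 0)
    (m : ℕ) (a b a' b' : ℝ) (u u' : Fin (d m) → ℝ) (v v' : Fin (d (m + 1)) → ℝ) :
    Pi (m + 1) ((a • R m u + b • R (m + 1) v) - (a' • R m u' + b' • R (m + 1) v')) =
      R (m + 1) (b • v - b' • v') := by
  simp [hproj]

end Glue

/-- Lower bound for the glued embedding via the coordinate projections of the Schauder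
decomposition: with `Π_m` of norm at most `4`, `R_m : ℓ_p^{d_m} → F_m` (with
`2^{m+1} ≤ d_m`, so that `T_{2^{m+1}} ⊆ ℓ_p^{d_m}`) satisfying
`(1/2)‖u‖_p ≤ ‖R_m u‖ ≤ ‖u‖_p`, `Π_m ∘ R_k = 0` for `k ≠ m` and `Π_m ∘ R_m = R_m`,
and `f_m = R_m ∘ φ_{d_m}`, the glued map `f` satisfies
`d_p(ε,ε') ≤ 16 ‖f(ε) - f(ε')‖` whenever `2^m ≤ |ε|, |ε'| < 2^{m+1}`. -/
theorem glued_map_lower_bound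
    {Z : Type*} [NormedAddCommGroup Z] [NormedSpace ℝ Z]
    (p : ℝ) (hp : 1 ≤ p)
    (d : ℕ → ℕ) (hd : ∀ m, 2 ^ (m + 1) ≤ d m)
    (Pi : ℕ → Z →L[ℝ] Z) (hPi : ∀ m, ‖Pi m‖ ≤ 4)
    (R : (m : ℕ) → (Fin (d m) → ℝ) →ₗ[ℝ] Z)
    (hR : ∀ m (u : Fin (d m) → ℝ),
      (1 / 2) * (∑ i, |u i| ^ p) ^ (1 / p) ≤ ‖R m u‖ ∧
        ‖R m u‖ ≤ (∑ i, |u i| ^ p) ^ (1 / p))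
    (hproj : ∀ m k (u : Fin (d k) → ℝ),
      Pi m (R k u) = if k = m then R k u else 0)
    (f : List Bool → Z)
    (hf : ∀ m (ε : List Bool), 2 ^ m ≤ ε.length → ε.length < 2 ^ (m + 1) →
      f ε = (((2 : ℝ) ^ (m + 1) - ε.length) / 2 ^ m) • R m (fun i => coord ε i) +
        (1 - ((2 : ℝ) ^ (m + 1) - ε.length) / 2 ^ m) • R (m + 1) (fun i => coord ε i)) :
    ∀ (m : ℕ) (ε ε' : List Bool),
      2 ^ m ≤ ε.length → ε.length < 2 ^ (m + 1) →
      2 ^ m ≤ ε'.length → ε'.length < 2 ^ (m + 1) →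
      dp p ε ε' ≤ 16 * ‖f ε - f ε'‖ := by
  intro m ε ε' hε₁ hε₂ hε'₁ hε'₂
  set l : ℝ := ((2 : ℝ) ^ (m + 1) - ε.length) / 2 ^ m
  set l' : ℝ := ((2 : ℝ) ^ (m + 1) - ε'.length) / 2 ^ m
  have hp0 : p ≠ 0 := by positivity
  set M := max ε.length ε'.length
  have hM : M ≤ 2 ^ (m + 1) := max_le hε₂.le hε'₂.le
  have hleft := sum_range_rpow_one_div_le_of_proj_eq hp0 (hM.trans (hd m)) (hPi m)
    (fun u => (hR m u).1) (fun i hi => mul_coord_sub_mul_coord_eq_zero hi l l')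
    (z := f ε - f ε')
    (by rw [hf m ε hε₁ hε₂, hf m ε' hε'₁ hε'₂, proj_glue_sub_left hproj]; rfl)
  have hright := sum_range_rpow_one_div_le_of_proj_eq hp0
    (hM.trans <| (Nat.pow_le_pow_right two_pos (m + 1).le_succ).trans (hd (m + 1)))
    (hPi (m + 1)) (fun u => (hR (m + 1) u).1)
    (fun i hi => mul_coord_sub_mul_coord_eq_zero hi (1 - l) (1 - l')) (z := f ε - f ε')
    (by rw [hf m ε hε₁ hε₂, hf m ε' hε'₁ hε'₂, proj_glue_sub_right hproj]; rfl)
  have hsplit : ∀ i, coord ε i - coord ε' i =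
      (l * coord ε i - l' * coord ε' i) + ((1 - l) * coord ε i - (1 - l') * coord ε' i) :=
    fun i => by ring
  calc dp p ε ε'
      ≤ (∑ i ∈ range M, |l * coord ε i - l' * coord ε' i| ^ p) ^ (1 / p) +
        (∑ i ∈ range M, |(1 - l) * coord ε i - (1 - l') * coord ε' i| ^ p) ^ (1 / p) := by
        rw [dp]
        simp_rw [hsplit]
        exact Real.Lp_add_le _ _ _ hp
    _ ≤ 2 * 4 * ‖f ε - f ε'‖ + 2 * 4 * ‖f ε - f ε'‖ := add_le_add hleft hright
    _ = 16 * ‖f ε - f ε'‖ := by ring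
end
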